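/- The integrals I₂ = v₀v₃ - v₂ + v₁v₄ and I₃ = (v₁+1)(v₀+v₂+2) + (v₃+1)(v₂+v₄+2) + (v₀+1)(v₁+v₃+1)(v₄+1)/v₂ of the Lotka-Volterra (3,-2) reduction are in involution: ∇I₂ · Ω · (∇I₃)ᵀ = 0, where Ω is the skew-symmetric matrix with entries Ω₁₃ = (v₀+1)(v₂+1), Ω₁₄ = -(v₀+1)(v₃+1), Ω₁₅ = (v₀+1)(1/v₂+1)(v₄+1), Ω₂₄ = (v₁+1)(v₃+1), Ω₂₅ = -(v₁+1)(v₄+1), Ω₃₅ = (v₂+1)(v₄+1). -/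

import Mathlib

open Matrix

/-- The structure matrix of the Lotka-Volterra (3,-2) reduction. -/
noncomputable def lvOmega (v : Fin 5 → ℝ) : Matrix (Fin 5) (Fin 5) ℝ :=
  !![0, 0, (v 0 + 1)*(v 2 + 1), -((v 0 + 1)*(v 3 + 1)), (v 0 + 1)*(1/(v 2) + 1)*(v 4 + 1);
     0, 0, 0, (v 1 + 1)*(v 3 + 1), -((v 1 + 1)*(v 4 + 1));
     -((v 0 + 1)*(v 2 + 1)), 0, 0, 0, (v 2 + 1)*(v 4 + 1);
     (v 0 + 1)*(v 3 + 1), -((v 1 + 1)*(v 3 + 1)), 0, 0, 0;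
     -((v 0 + 1)*(1/(v 2) + 1)*(v 4 + 1)), (v 1 + 1)*(v 4 + 1), -((v 2 + 1)*(v 4 + 1)), 0, 0]

/-- The integral I₂ of the Lotka-Volterra reduction. -/
noncomputable def lvI2 (v : Fin 5 → ℝ) : ℝ := v 0 * v 3 - v 2 + v 1 * v 4

/-- The integral I₃ of the Lotka-Volterra reduction. -/
noncomputable def lvI3 (v : Fin 5 → ℝ) : ℝ :=
  (v 1 + 1) * (v 0 + v 2 + 2) + (v 3 + 1) * (v 2 + v 4 + 2)
    + (v 0 + 1) * (v 1 + v 3 + 1) * (v 4 + 1) / v 2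

/-- Gradient of a function on ℝ⁵ (vector of partial derivatives). -/
noncomputable def grad (f : (Fin 5 → ℝ) → ℝ) (v : Fin 5 → ℝ) : Fin 5 → ℝ :=
  fun l => deriv (fun t => f (Function.update v l t)) (v l)

lemma grad_lvI2 (v : Fin 5 → ℝ) : grad lvI2 v = ![v 3, v 4, -1, v 0, v 1] := by
  funext l
  fin_cases l <;> simp [grad, lvI2, Function.update]

lemma grad_lvI3 (v : Fin 5 → ℝ) (h : v 2 ≠ 0) :
    grad lvI3 v = ![
      (v 1 + 1) + (v 1 + v 3 + 1) * (v 4 + 1) / v 2,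
      (v 0 + v 2 + 2) + (v 0 + 1) * (v 4 + 1) / v 2,
      (v 1 + 1) + (v 3 + 1) - (v 0 + 1) * (v 1 + v 3 + 1) * (v 4 + 1) / v 2 ^ 2,
      (v 2 + v 4 + 2) + (v 0 + 1) * (v 4 + 1) / v 2,
      (v 3 + 1) + (v 0 + 1) * (v 1 + v 3 + 1) / v 2] := by
  funext l
  fin_cases l <;>
    simp (disch := fun_prop (disch := exact h))
      [grad, lvI3, Function.update, deriv_fun_add, deriv_fun_mul]
  -- only the `v 2` coordinate, in which `lvI3` has a pole, is left to normalise
  field_simp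
  ring

/-- I₂ and I₃ are in involution with respect to the Lotka-Volterra Poisson bracket. -/
theorem lvI2_I3_involution (v : Fin 5 → ℝ) (h : v 2 ≠ 0) :
    grad lvI2 v ⬝ᵥ (lvOmega v *ᵥ grad lvI3 v) = 0 := by
  rw [grad_lvI2, grad_lvI3 v h, lvOmega]
  simp only [dotProduct, mulVec, Fin.sum_univ_five, of_apply, cons_val', cons_val_fin_one,
    cons_val_zero, cons_val_one, cons_val]
  field_simp
  ring
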